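/- For a fixed non-increasing non-negative sequence λ_1 ≥ ... ≥ λ_p ≥ 0, the sets H_r for r ∈ {1,...,p}, defined by H_r = { w ∈ ℝ^p : for all j ≤ r, Σ_{i=j}^r λ_i < Σ_{i=j}^r |w|_{(i)}, and for all j ≥ r+1, Σ_{i=r+1}^j λ_i ≥ Σ_{i=r+1}^j |w|_{(i)} }, are pairwise disjoint. -/
import Mathlib


/-- The `i`-th largest absolute value of the coordinates of `w : Fin p → ℝ`
(0-indexed). -/
noncomputable def sortedAbs {p : ℕ} (w : Fin p → ℝ) (i : Fin p) : ℝ :=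
  |w (Tuple.sort (fun j => |w j|) i.rev)|

/-- `|w|₍ᵢ₎` with 1-based indexing `i ∈ {1,…,p}` (and `0` outside this range). -/
noncomputable def sAbs {p : ℕ} (w : Fin p → ℝ) (i : ℕ) : ℝ :=
  if h : 1 ≤ i ∧ i ≤ p then sortedAbs w ⟨i - 1, by omega⟩ else 0

/-- Membership in the set `H_r`. -/
def memH {p : ℕ} (lam : ℕ → ℝ) (r : ℕ) (w : Fin p → ℝ) : Prop :=
  (∀ j, 1 ≤ j → j ≤ r → ∑ i ∈ Finset.Icc j r, lam i < ∑ i ∈ Finset.Icc j r, sAbs w i) ∧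
  (∀ j, r + 1 ≤ j → j ≤ p →
    ∑ i ∈ Finset.Icc (r + 1) j, sAbs w i ≤ ∑ i ∈ Finset.Icc (r + 1) j, lam i)

/-- the sets `H_r`, `r ∈ {1,…,p}`, are pairwise disjoint. -/
theorem memH_disjoint {p : ℕ} (lam : ℕ → ℝ)
    (hmono : ∀ i j, 1 ≤ i → i ≤ j → j ≤ p → lam j ≤ lam i)
    (hnonneg : ∀ i, 1 ≤ i → i ≤ p → 0 ≤ lam i)
    (r s : ℕ) (hr1 : 1 ≤ r) (hrp : r ≤ p) (hs1 : 1 ≤ s) (hsp : s ≤ p)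
    (hrs : r ≠ s) (w : Fin p → ℝ) :
    ¬ (memH lam r w ∧ memH lam s w) := by
  rintro ⟨hA, hB⟩
  rcases lt_or_gt_of_ne hrs with h | h
  · have h1 := hA.2 s h hsp
    have h2 := hB.1 (r + 1) (by omega) h
    linarith
  · have h1 := hB.2 r h hrp
    have h2 := hA.1 (s + 1) (by omega) h
    linarith
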